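/- arXiv:1609.09332 — 2 statements merged into one kernel-verified Lean document; each statement's English description precedes it below -/
import Mathlib

section
/- Let n ≥ 2 be an integer, δ ≥ 0, and let m : (0, T] → ℝ be a continuously differentiable function satisfying m'(r) + m(r)^2/(n-1) ≤ -1/2 + (1/2 + δ) for all r ∈ (0, T], with r^2 m(r) → 0 as r → 0⁺. Then for every t ∈ (0, T], m(t) ≤ (n-1)/t + δ t / 3. -/
open Set Filter Topology

/-!
Put `G(r) = r² m(r)`. Multiplying the Riccati inequality by `r²` and completing the square in
`m²` gives `G' ≤ (n - 1) + δ r²`, the derivative of `H(r) = (n - 1) r + δ r³ / 3`. So `G - H`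
is antitone on `(0, T]`, and since it tends to `0` at `0⁺` it is nonpositive there, i.e.
`t² m(t) ≤ (n - 1) t + δ t³ / 3`.
-/

lemma two_mul_mul_add_sq_mul_le_of_add_sq_div_le {k δ r m m' : ℝ} (hk : 0 < k)
    (h : m' + m ^ 2 / k ≤ δ) : 2 * r * m + r ^ 2 * m' ≤ k + δ * r ^ 2 := by
  have hm' : m' ≤ δ - m ^ 2 / k := by linarith
  have hsq : 0 ≤ (r * m - k) ^ 2 / k := by positivity
  calc 2 * r * m + r ^ 2 * m'
      ≤ 2 * r * m + r ^ 2 * (δ - m ^ 2 / k) := by gcongr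
    _ = k + δ * r ^ 2 - (r * m - k) ^ 2 / k := by field_simp; ring
    _ ≤ k + δ * r ^ 2 := by linarith

lemma le_of_tendsto_nhdsGT_of_hasDerivAt_nonpos {a b L : ℝ} {f f' : ℝ → ℝ}
    (hf : ∀ x ∈ Ioc a b, HasDerivAt f (f' x) x) (hf' : ∀ x ∈ Ioc a b, f' x ≤ 0)
    (hlim : Tendsto f (𝓝[>] a) (𝓝 L)) {t : ℝ} (ht : t ∈ Ioc a b) : f t ≤ L := by
  have hanti : AntitoneOn f (Ioc a b) :=
    antitoneOn_of_hasDerivWithinAt_nonpos (convex_Ioc a b)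
      (fun x hx ↦ (hf x hx).continuousAt.continuousWithinAt)
      (fun x hx ↦ (hf x (interior_subset hx)).hasDerivWithinAt)
      (fun x hx ↦ hf' x (interior_subset hx))
  refine ge_of_tendsto hlim ?_
  filter_upwards [Ioc_mem_nhdsGT ht.1] with x hx
  exact hanti ⟨hx.1, hx.2.trans ht.2⟩ ht hx.2

theorem stmt1_general (n : ℕ) (hn : 2 ≤ n) (δ T : ℝ)
    (m m' : ℝ → ℝ)
    (hderiv : ∀ r ∈ Ioc (0 : ℝ) T, HasDerivAt m (m' r) r)
    (hineq : ∀ r ∈ Ioc (0 : ℝ) T,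
      m' r + (m r) ^ 2 / (n - 1 : ℝ) ≤ -(1 / 2) + (1 / 2 + δ))
    (hlim : Tendsto (fun r => r ^ 2 * m r) (nhdsWithin 0 (Ioi 0)) (nhds 0)) :
    ∀ t ∈ Ioc (0 : ℝ) T, m t ≤ (n - 1 : ℝ) / t + δ * t / 3 := by
  intro t ht
  set k : ℝ := n - 1
  have hk : 0 < k := by
    have : (2 : ℝ) ≤ n := by exact_mod_cast hn
    linarith
  have hderiv_diff : ∀ r ∈ Ioc (0 : ℝ) T,
      HasDerivAt (fun r ↦ r ^ 2 * m r - (k * r + δ * r ^ 3 / 3))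
        (2 * r * m r + r ^ 2 * m' r - (k + δ * r ^ 2)) r := by
    intro r hr
    refine (((hasDerivAt_pow 2 r).mul (hderiv r hr)).sub (((hasDerivAt_id r).const_mul k).add
      (((hasDerivAt_pow 3 r).const_mul δ).div_const 3))).congr_deriv ?_
    push_cast; ring
  have hdiff_nonpos : ∀ r ∈ Ioc (0 : ℝ) T, 2 * r * m r + r ^ 2 * m' r - (k + δ * r ^ 2) ≤ 0 :=
    fun r hr ↦ sub_nonpos.2 <|
      two_mul_mul_add_sq_mul_le_of_add_sq_div_le hk (by linarith [hineq r hr])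
  have hlim_diff : Tendsto (fun r ↦ r ^ 2 * m r - (k * r + δ * r ^ 3 / 3)) (𝓝[>] 0) (𝓝 0) := by
    have hH : Tendsto (fun r : ℝ ↦ k * r + δ * r ^ 3 / 3) (𝓝[>] 0) (𝓝 0) :=
      ((by fun_prop : Continuous fun r : ℝ ↦ k * r + δ * r ^ 3 / 3).tendsto' 0 0
        (by simp)).mono_left nhdsWithin_le_nhds
    simpa using hlim.sub hH
  have hdiff_le := le_of_tendsto_nhdsGT_of_hasDerivAt_nonpos hderiv_diff hdiff_nonpos hlim_diff ht
  have ht0 : 0 < t := ht.1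
  have hrhs : k / t + δ * t / 3 = (k * t + δ * t ^ 3 / 3) / t ^ 2 := by field_simp
  rw [hrhs, le_div_iff₀ (by positivity)]
  linarith

/-- Riccati comparison for the mean curvature of geodesic spheres on a Ricci
shrinker with `Hess f ≤ 1/2 + δ`:  if `m` is `C¹` on `(0, T]` with
`m' + m²/(n-1) ≤ -1/2 + (1/2 + δ)` and `r² m(r) → 0` as `r → 0⁺`, then
`m(t) ≤ (n-1)/t + δ t / 3` on `(0, T]`. -/
theorem stmt1 (n : ℕ) (hn : 2 ≤ n) (δ T : ℝ) (hδ : 0 ≤ δ) (hT : 0 < T)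
    (m m' : ℝ → ℝ)
    (hderiv : ∀ r ∈ Ioc (0 : ℝ) T, HasDerivAt m (m' r) r)
    (hcont : ContinuousOn m' (Ioc (0 : ℝ) T))
    (hineq : ∀ r ∈ Ioc (0 : ℝ) T,
      m' r + (m r) ^ 2 / (n - 1 : ℝ) ≤ -(1 / 2) + (1 / 2 + δ))
    (hlim : Tendsto (fun r => r ^ 2 * m r) (nhdsWithin 0 (Ioi 0)) (nhds 0)) :
    ∀ t ∈ Ioc (0 : ℝ) T, m t ≤ (n - 1 : ℝ) / t + δ * t / 3 :=
  stmt1_general n hn δ T m m' hderiv hineq hlim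
end

section
/- Let n ≥ 2, c > 0, and let m : [1, ∞) → ℝ be a continuous function such that for all T ≥ 1, m(T) + (1/((n-1)T)) (∫₁ᵀ m(r) dr)^2 < c. Then for all T ≥ 1, ∫₁ᵀ m(r) dr ≤ √(c (n-1) T). -/
open Set intervalIntegral Filter Topology

/-- Key analytic step of the unit-ball volume comparison for Ricci shrinkers:
if `m` is continuous on `[1, ∞)` and
`m(T) + (1/((n-1)T)) (∫₁ᵀ m)² < c` for all `T ≥ 1`, then
`∫₁ᵀ m ≤ √(c (n-1) T)` for all `T ≥ 1`. -/
theorem stmt2 (n : ℕ) (hn : 2 ≤ n) (c : ℝ) (hc : 0 < c) (m : ℝ → ℝ)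
    (hcont : ContinuousOn m (Ici (1 : ℝ)))
    (h : ∀ T ≥ (1 : ℝ),
      m T + (1 / ((n - 1 : ℝ) * T)) * (∫ r in (1 : ℝ)..T, m r) ^ 2 < c) :
    ∀ T ≥ (1 : ℝ), (∫ r in (1 : ℝ)..T, m r) ≤ Real.sqrt (c * (n - 1 : ℝ) * T) := by
  intro T hT
  by_contra hFT
  push_neg at hFT
  have hn1 : (1:ℝ) ≤ (n:ℝ) - 1 := by
    have h2 : (2:ℝ) ≤ (n:ℝ) := by exact_mod_cast hn
    linarith
  set K : ℝ := c * ((n:ℝ) - 1) with hKdef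
  have hKpos : 0 < K := by
    have : (0:ℝ) < (n:ℝ) - 1 := by linarith
    positivity
  set F : ℝ → ℝ := fun t => ∫ r in (1:ℝ)..t, m r with hFdef
  set g : ℝ → ℝ := fun t => Real.sqrt (K * t) with hgdef
  -- continuity of F on [1, T]
  have hsub : uIcc (1:ℝ) T ⊆ Ici 1 := by
    rw [uIcc_of_le hT]
    exact Icc_subset_Ici_self
  have hFcont : ContinuousOn F (Icc 1 T) := by
    have := intervalIntegral.continuousOn_primitive_interval
      (f := m) (μ := MeasureTheory.volume) (a := (1:ℝ)) (b := T)
      ((hcont.mono hsub).integrableOn_compact isCompact_uIcc)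
    rwa [uIcc_of_le hT] at this
  -- the bad set
  set S : Set ℝ := {t ∈ Icc (1:ℝ) T | g t ≤ F t} with hSdef
  have hTS : T ∈ S := ⟨⟨hT, le_refl T⟩, hFT.le⟩
  have hSclosed : IsClosed S := by
    have hgc : ContinuousOn g (Icc 1 T) := (Real.continuous_sqrt.comp
      (continuous_const.mul continuous_id)).continuousOn
    have : S = {t ∈ Icc (1:ℝ) T | (fun t => g t - F t) t ∈ Iic (0:ℝ)} := by
      ext t; simp [hSdef, sub_nonpos]
    rw [this]
    exact ContinuousOn.preimage_isClosed_of_isClosed (hgc.sub hFcont)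
      isClosed_Icc isClosed_Iic
  have hSbdd : BddBelow S := ⟨1, fun t ht => ht.1.1⟩
  set R : ℝ := sInf S with hRdef
  have hRS : R ∈ S := hSclosed.csInf_mem ⟨T, hTS⟩ hSbdd
  have hR1 : 1 < R := by
    rcases lt_or_eq_of_le hRS.1.1 with h' | h'
    · exact h'
    · exfalso
      have hF1 : F 1 = 0 := by simp [hFdef]
      have hg1 : 0 < g 1 := by
        simp only [hgdef, mul_one]
        exact Real.sqrt_pos.2 hKpos
      have := hRS.2
      rw [← h'] at this
      linarith
  have hRT : R ≤ T := hRS.1.2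
  -- m R < 0
  have hmR : m R < 0 := by
    have hgR : g R = Real.sqrt (K * R) := rfl
    have hFR : Real.sqrt (K * R) ≤ F R := hRS.2
    have hKR : 0 ≤ K * R := by positivity
    have hsq : K * R ≤ (F R)^2 := by
      have h0 : 0 ≤ Real.sqrt (K * R) := Real.sqrt_nonneg _
      calc K * R = Real.sqrt (K * R) ^ 2 := (Real.sq_sqrt hKR).symm
        _ ≤ (F R)^2 := by nlinarith
    have hhyp := h R (le_of_lt hR1)
    have hden : 0 < ((n:ℝ) - 1) * R := by nlinarith
    have : c ≤ (1 / (((n:ℝ) - 1) * R)) * (F R)^2 := by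
      rw [div_mul_eq_mul_div, one_mul, le_div_iff₀ hden]
      calc c * (((n:ℝ)-1) * R) = K * R := by ring
        _ ≤ (F R)^2 := hsq
    have hFReq : (∫ r in (1:ℝ)..R, m r) = F R := rfl
    rw [hFReq] at hhyp
    linarith
  -- derivative of F at R
  have hmcontR : ContinuousAt m R := hcont.continuousAt (Ici_mem_nhds hR1)
  have hFint : IntervalIntegrable m MeasureTheory.volume 1 R :=
    (hcont.mono (by rw [uIcc_of_le (le_of_lt hR1)]; exact Icc_subset_Ici_self)).intervalIntegrable
  have hmeas : StronglyMeasurableAtFilter m (𝓝 R) MeasureTheory.volume :=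
    ContinuousOn.stronglyMeasurableAtFilter isOpen_Ioi
      (hcont.mono Ioi_subset_Ici_self) R hR1
  have hFderiv : HasDerivAt F (m R) R :=
    intervalIntegral.integral_hasDerivAt_right hFint hmeas hmcontR
  -- derivative of g at R
  have hKR0 : K * R ≠ 0 := by positivity
  have hgderiv : HasDerivAt g (K / (2 * Real.sqrt (K * R))) R := by
    have h1 : HasDerivAt (fun t : ℝ => K * t) K R := by
      simpa using (hasDerivAt_id R).const_mul K
    have h2 := (Real.hasDerivAt_sqrt hKR0).comp R h1
    have h3 : (1 / (2 * Real.sqrt (K * R))) * K = K / (2 * Real.sqrt (K * R)) := by ring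
    rw [← h3]
    exact h2
  -- h := g - F has positive derivative at R
  have hgpos : 0 < K / (2 * Real.sqrt (K * R)) := by
    have : 0 < Real.sqrt (K * R) := Real.sqrt_pos.2 (by positivity)
    positivity
  set d : ℝ := K / (2 * Real.sqrt (K * R)) - m R with hddef
  have hdpos : 0 < d := by simp only [hddef]; linarith
  have hhd : HasDerivAt (fun t => g t - F t) d R := hgderiv.sub hFderiv
  -- slope tendsto
  have hslope := hasDerivAt_iff_tendsto_slope.1 hhd
  have hslope' : Filter.Tendsto (slope (fun t => g t - F t) R) (𝓝[<] R) (𝓝 d) :=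
    hslope.mono_left (nhdsWithin_mono R (fun x hx => ne_of_lt hx))
  have hev : ∀ᶠ t in 𝓝[<] R, 0 < slope (fun t => g t - F t) R t :=
    hslope' (Ioi_mem_nhds hdpos)
  have hev2 : ∀ᶠ t in 𝓝[<] R, t ∈ Ioo (1:ℝ) R := Ioo_mem_nhdsLT hR1
  have : ∃ t, 0 < slope (fun t => g t - F t) R t ∧ t ∈ Ioo (1:ℝ) R := by
    rcases (hev.and hev2).exists with ⟨t, ht⟩
    exact ⟨t, ht⟩
  rcases this with ⟨t, hts, ht1, htR⟩
  -- t ∉ S, so F t < g t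
  have htnotS : t ∉ S := fun hmem => absurd (csInf_le hSbdd hmem) (not_le.2 htR)
  have htIcc : t ∈ Icc (1:ℝ) T := ⟨le_of_lt ht1, le_of_lt (lt_of_lt_of_le htR hRT)⟩
  have hFt : F t < g t := by
    by_contra hcon
    exact htnotS ⟨htIcc, not_lt.1 hcon⟩
  -- but slope is negative: (h t - h R)/(t - R) with h t > 0 ≥ h R, t < R
  have hhR : g R - F R ≤ 0 := sub_nonpos.2 hRS.2
  have hht : 0 < g t - F t := sub_pos.2 hFt
  have hslopeneg : slope (fun t => g t - F t) R t < 0 := by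
    rw [slope_def_field]
    apply div_neg_of_pos_of_neg
    · linarith
    · linarith
  linarith
end
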